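/- arXiv:1606.04762 — 4 statements merged into one kernel-verified Lean document; each statement's English description precedes it below -/
import Mathlib

section
/- Define operators T_r on ℚ[x] by T_r = (1/r!)·X^r ∘ D^r, where X is multiplication by x and D is d/dx. Then for all non-negative integers r, r' one has T_r ∘ T_{r'} = Σ_{i=0}^{min(r,r')} [(r+r'−i)!/(i!·(r−i)!·(r'−i)!)] · T_{r+r'−i}. -/
/-! By Leibniz' rule, `D^r (X^m q) = Σ_i C(r,i) m(m-1)⋯(m-i+1) X^(m-i) D^(r-i) q`, the terms with
`i > m` vanishing; so `X^r D^r X^m D^m` is a combination of the operators `X^n D^n`, and the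
coefficients simplify through `C(r,i) i! (r-i)! = r!` and `(m-i)! m(m-1)⋯(m-i+1) = m!`. -/

open Polynomial Finset

/-- The operator T_r = (1/r!)·X^r ∘ D^r on ℚ[x]. -/
noncomputable def Tproj (r : ℕ) (p : Polynomial ℚ) : Polynomial ℚ :=
  ((r.factorial : ℚ))⁻¹ • (X ^ r * derivative^[r] p)

theorem Nat.choose_mul_descFactorial_mul_factorials {r m i : ℕ} (hr : i ≤ r) (hm : i ≤ m) :
    r.choose i * m.descFactorial i * (i.factorial * (r - i).factorial * (m - i).factorial) =
      r.factorial * m.factorial := by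
  rw [← Nat.choose_mul_factorial_mul_factorial hr, ← Nat.factorial_mul_descFactorial hm]
  ring

namespace Polynomial

variable {R : Type*} [CommSemiring R]

theorem X_pow_mul_iterate_derivative_X_pow_mul (r m : ℕ) (q : R[X]) :
    X ^ r * derivative^[r] (X ^ m * q) =
      ∑ i ∈ range (min r m + 1),
        ((r.choose i * m.descFactorial i : ℕ) : R) • (X ^ (r + m - i) * derivative^[r - i] q) := by
  rw [mul_comm (X ^ m) q, iterate_derivative_mul, mul_sum]
  simp_rw [iterate_derivative_X_pow_eq_smul]
  refine (sum_subset (s₁ := range (min r m + 1)) (fun i hi => ?_) (fun i hi hi' => ?_)).symm.trans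
    (sum_congr rfl fun i hi => ?_)
  · simp only [mem_range] at hi ⊢
    omega
  · simp only [mem_range] at hi hi'
    simp [Nat.descFactorial_eq_zero_iff_lt.mpr (show m < i by omega)]
  · simp only [mem_range] at hi
    rw [show r + m - i = r + (m - i) by omega, pow_add]
    simp only [nsmul_eq_mul, smul_eq_C_mul, Nat.cast_mul, map_mul, map_natCast]
    ring

theorem X_pow_mul_iterate_derivative_X_pow_mul_iterate_derivative (r m : ℕ) (p : R[X]) :
    X ^ r * derivative^[r] (X ^ m * derivative^[m] p) =
      ∑ i ∈ range (min r m + 1),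
        ((r.choose i * m.descFactorial i : ℕ) : R) • (X ^ (r + m - i) * derivative^[r + m - i] p) := by
  rw [X_pow_mul_iterate_derivative_X_pow_mul]
  refine sum_congr rfl fun i hi => ?_
  rw [← Function.iterate_add_apply, show r - i + m = r + m - i by grind]

end Polynomial

/-- T_r ∘ T_{r'} = Σ_{i=0}^{min(r,r')} [(r+r'−i)!/(i!·(r−i)!·(r'−i)!)] · T_{r+r'−i}. -/
theorem Top_comp (r r' : ℕ) (p : Polynomial ℚ) :
    Tproj r (Tproj r' p) =
      ∑ i ∈ range (min r r' + 1),
        (((r + r' - i).factorial : ℚ) /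
            ((i.factorial : ℚ) * ((r - i).factorial : ℚ) * ((r' - i).factorial : ℚ))) •
          Tproj (r + r' - i) p := by
  simp only [Tproj]
  rw [iterate_derivative_smul, mul_smul_comm, smul_smul,
    X_pow_mul_iterate_derivative_X_pow_mul_iterate_derivative, smul_sum]
  refine sum_congr rfl fun i hi => ?_
  rw [mem_range] at hi
  have hcoeff : ((r.choose i * r'.descFactorial i : ℕ) : ℚ) *
      ((i.factorial : ℚ) * (r - i).factorial * (r' - i).factorial) =
      (r.factorial : ℚ) * r'.factorial := by
    exact_mod_cast Nat.choose_mul_descFactorial_mul_factorials (by omega) (by omega)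
  rw [smul_smul, smul_smul]
  congr 1
  field_simp
  linear_combination hcoeff
end

section
/- Let G, H, Φ, Ψ, deg, h and the bilinear product · be as in the abstract cubic setting, satisfying Ψ(Φ(a)·Φ(b)) = −2·deg(b)·a − 2·deg(a)·b + 3·deg(a)·deg(b)·h for all a, b ∈ H. Let o ∈ G with deg(Ψ(o)) = 1 and let γ ∈ G be such that Ψ(γ) is a torsion element of H. Then Ψ( Φ(Ψ(γ))·Φ(Ψ(o)) + 2·γ ) is a torsion element of H; more precisely, if Ψ(γ) is killed by the positive integer n, then so is Ψ( Φ(Ψ(γ))·Φ(Ψ(o)) + 2·γ ). -/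
/-- Abstract form of Lemma 7.2(iii): if Ψγ is killed by n > 0 and deg(Ψo) = 1, then
Ψ(Φ(Ψγ)·Φ(Ψo) + 2γ) is killed by n as well. -/
theorem torsion_relation {G H : Type*} [AddCommGroup G] [AddCommGroup H]
    (Φ : H →+ G) (Ψ : G →+ H) (deg : H →+ ℤ) (h : H) (hh : deg h = 3)
    (dot : G → G → G)
    (hdl : ∀ x y z : G, dot (x + y) z = dot x z + dot y z)
    (hdr : ∀ x y z : G, dot x (y + z) = dot x y + dot x z)
    (hrel : ∀ a b : H, Ψ (dot (Φ a) (Φ b)) =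
      (-2 * deg b) • a + (-2 * deg a) • b + (3 * deg a * deg b) • h)
    (o γ : G) (ho : deg (Ψ o) = 1)
    (n : ℕ) (hn : 0 < n) (hγ : n • Ψ γ = 0) :
    n • Ψ (dot (Φ (Ψ γ)) (Φ (Ψ o)) + (2 : ℤ) • γ) = 0 := by
  have hd0 : deg (Ψ γ) = 0 := by
    have := congrArg deg hγ
    simp only [map_nsmul, map_zero, nsmul_eq_mul] at this
    rcases mul_eq_zero.mp this with h1 | h2
    · exact absurd (by exact_mod_cast h1) hn.ne'
    · exact h2
  have key : Ψ (dot (Φ (Ψ γ)) (Φ (Ψ o)) + (2 : ℤ) • γ) = 0 := by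
    rw [map_add, hrel, ho, hd0, map_zsmul]
    simp
  rw [key, smul_zero]
end

section
/- Let R be an associative (not necessarily commutative) ring with identity 1 in which 2 is invertible. Suppose e, g ∈ R satisfy: e² = e, e·g = 5·e, g·e = 5·e, and g² = 35·e − 2·g. Define π₀ = e, π₁ = (1/2)·(5·e − g), and π₂ = 1 − π₀ − π₁. Then π₀, π₁, π₂ are idempotent, pairwise orthogonal (πᵢ·πⱼ = 0 for i ≠ j), and π₀ + π₁ + π₂ = 1. -/
/-- Projector computations of Theorem 7.4: in a ring with 1/2, from e² = e,
e·g = g·e = 5·e and g² = 35·e − 2·g, the elements π₀ = e, π₁ = (1/2)(5e − g),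
π₂ = 1 − π₀ − π₁ are pairwise orthogonal idempotents summing to 1. -/
theorem birational_CK_projectors {R : Type*} [Ring R] [Invertible (2 : R)]
    (e g : R) (he : e * e = e) (heg : e * g = 5 • e) (hge : g * e = 5 • e)
    (hgg : g * g = 35 • e - 2 • g) :
    let π₀ : R := e
    let π₁ : R := ⅟(2 : R) * (5 • e - g)
    let π₂ : R := 1 - π₀ - π₁
    (π₀ * π₀ = π₀ ∧ π₁ * π₁ = π₁ ∧ π₂ * π₂ = π₂) ∧
    (π₀ * π₁ = 0 ∧ π₁ * π₀ = 0 ∧ π₀ * π₂ = 0 ∧ π₂ * π₀ = 0 ∧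
      π₁ * π₂ = 0 ∧ π₂ * π₁ = 0) ∧
    π₀ + π₁ + π₂ = 1 := by
  intro π₀ π₁ π₂
  have hc : ∀ x : R, x * ⅟(2:R) = ⅟(2:R) * x := fun x =>
    ((Commute.ofNat_right x 2).invOf_right).eq
  set A : R := 5 • e - g with hAdef
  have hAA : A * A = 2 • A := by
    simp only [hAdef, mul_sub, sub_mul, smul_mul_assoc, mul_smul_comm, he, heg, hge, hgg,
      smul_smul, smul_sub]
    abel
  have heA : e * A = 0 := by
    simp only [hAdef, mul_sub, mul_smul_comm, he, heg]; abel
  have hAe : A * e = 0 := by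
    simp only [hAdef, sub_mul, smul_mul_assoc, he, hge]; abel
  have h00 : π₀ * π₀ = π₀ := he
  have h01 : π₀ * π₁ = 0 := by
    show e * (⅟(2:R) * A) = 0
    rw [← mul_assoc, hc e, mul_assoc, heA, mul_zero]
  have h10 : π₁ * π₀ = 0 := by
    show ⅟(2:R) * A * e = 0
    rw [mul_assoc, hAe, mul_zero]
  have h11 : π₁ * π₁ = π₁ := by
    show ⅟(2:R) * A * (⅟(2:R) * A) = ⅟(2:R) * A
    rw [mul_assoc, ← mul_assoc A, hc A, mul_assoc, hAA, ← mul_assoc,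
      two_smul, ← two_mul, ← mul_assoc (⅟(2:R) * ⅟(2:R)) 2 A, mul_assoc (⅟(2:R)) (⅟(2:R)) 2, invOf_mul_self, mul_one]
  have h02 : π₀ * π₂ = 0 := by
    show π₀ * (1 - π₀ - π₁) = 0
    rw [mul_sub, mul_sub, mul_one, h00, h01, sub_zero, sub_self]
  have h20 : π₂ * π₀ = 0 := by
    show (1 - π₀ - π₁) * π₀ = 0
    rw [sub_mul, sub_mul, one_mul, h00, h10, sub_zero, sub_self]
  have h12 : π₁ * π₂ = 0 := by
    show π₁ * (1 - π₀ - π₁) = 0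
    rw [mul_sub, mul_sub, mul_one, h10, h11, sub_zero, sub_self]
  have h21 : π₂ * π₁ = 0 := by
    show (1 - π₀ - π₁) * π₁ = 0
    rw [sub_mul, sub_mul, one_mul, h01, h11, sub_zero, sub_self]
  have h22 : π₂ * π₂ = π₂ := by
    show (1 - π₀ - π₁) * π₂ = π₂
    rw [sub_mul, sub_mul, one_mul, h02, h12, sub_zero, sub_zero]
  refine ⟨⟨h00, h11, h22⟩, ⟨h01, h10, h02, h20, h12, h21⟩, ?_⟩
  show π₀ + π₁ + (1 - π₀ - π₁) = 1
  abel
end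

section
/- Let G be an abelian group with ℤ-bilinear product ·, let Ψ : G → H and Φ : H → G be homomorphisms of abelian groups with H abelian, and set I = Φ∘Ψ : G → G. Let deg : H → ℤ be a homomorphism and h ∈ H with deg(h)=3, and assume Ψ(Φa·Φb) = −2 deg(b)·a − 2 deg(a)·b + 3 deg(a)deg(b)·h for all a,b ∈ H. Let o ∈ G satisfy 3·Ψ(o) = h and I(o)·I(o) = 5·o. Then for every τ ∈ G with 3·Ψ(τ) = h and deg(Ψo) = deg(Ψτ) = 1, we have Ψ( I(o)·I(I(o)·I(τ)) − 35·o + 2·I(o)·I(τ) ) = 0. -/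
/-- Abstract form of the key computation in Theorem 7.4:
Ψ( I(o)·I(I(o)·I(τ)) − 35·o + 2·I(o)·I(τ) ) = 0, where I = Φ∘Ψ. -/
theorem key_projector_computation {G H : Type*} [AddCommGroup G] [AddCommGroup H]
    (Φ : H →+ G) (Ψ : G →+ H) (deg : H →+ ℤ) (h : H) (hh : deg h = 3)
    (dot : G → G → G)
    (hdl : ∀ x y z : G, dot (x + y) z = dot x z + dot y z)
    (hdr : ∀ x y z : G, dot x (y + z) = dot x y + dot x z)
    (hrel : ∀ a b : H, Ψ (dot (Φ a) (Φ b)) =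
      (-2 * deg b) • a + (-2 * deg a) • b + (3 * deg a * deg b) • h)
    (I : G → G) (hI : ∀ x : G, I x = Φ (Ψ x))
    (o τ : G)
    (ho3 : (3 : ℤ) • Ψ o = h) (hoI : dot (I o) (I o) = (5 : ℤ) • o)
    (hτ3 : (3 : ℤ) • Ψ τ = h)
    (hdego : deg (Ψ o) = 1) (hdegτ : deg (Ψ τ) = 1) :
    Ψ (dot (I o) (I (dot (I o) (I τ))) - (35 : ℤ) • o + (2 : ℤ) • dot (I o) (I τ)) = 0 := by
  set a := Ψ o with ha
  set b := Ψ τ with hb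
  have e1 : Ψ (dot (I o) (I τ)) = (-2 : ℤ) • a + (-2 : ℤ) • b + (3 : ℤ) • h := by
    rw [hI o, hI τ, hrel a b, hdego, hdegτ]; norm_num
  have hdegs : deg ((-2 : ℤ) • a + (-2 : ℤ) • b + (3 : ℤ) • h) = 5 := by
    simp [hdego, hdegτ, hh]
  have e2 : Ψ (dot (I o) (I (dot (I o) (I τ)))) =
      (-6 : ℤ) • a + (4 : ℤ) • b + (9 : ℤ) • h := by
    rw [hI (dot (I o) (I τ)), e1]
    rw [show I o = Φ a from hI o, hrel a _, hdegs, hdego]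
    push_cast
    rw [smul_add, smul_add, smul_smul, smul_smul, smul_smul]
    module
  rw [map_add, map_sub, e2, map_zsmul, map_zsmul, e1, ← ha, ← ho3]
  module
end
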